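/- Let f : ℝ → ℝ be twice continuously differentiable on a neighborhood of c, and let K be a continuous probability density with compact support. Define μ₊,ⱼ(h) = E[1(X ≥ c) K_h(X − c)(X − c)ʲ] for j ∈ ℕ, where K_h(u) = K(u/h)/h and X has density f. Then as h → 0⁺, μ₊,ⱼ(h) = hʲ [f(c)·K₊,₁ⱼ + h·f′(c)·K₊,₁(ⱼ₊₁) + O(h²)], where K₊,₁ⱼ = ∫₀^∞ uʲ K(u) du. -/

import Mathlib

/-!
Substituting `x = c + h y` turns the moment into `h ^ j * ∫_{y > 0} y ^ j K(y) f(c + h y) dy`.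
Writing `f (c + t) = f c + t f'(c) + r t`, the two main terms give the claimed expansion and what
is left is `h ^ j * ∫_{y > 0} y ^ j K(y) r(h y) dy`. By Taylor's theorem `|r t| ≤ C t ^ 2` for
`0 ≤ t < ε`, and since `K y = 0` for `y > M`, only `0 < y ≤ M` contributes once `h M < ε`; there
`|r (h y)| ≤ C h ^ 2 y ^ 2`, so the remainder is `O(h ^ (j + 2))`.
-/

open MeasureTheory Filter

open Set Topology Asymptotics

theorem ContDiffAt.isBigO_sub_sub_smul_deriv {E : Type*} [NormedAddCommGroup E] [NormedSpace ℝ E]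
    {f : ℝ → E} {c : ℝ} (hf : ContDiffAt ℝ 2 f c) :
    (fun x => f x - f c - (x - c) • deriv f c) =O[𝓝 c] fun x => (x - c) ^ 2 := by
  obtain ⟨u, hu, hfu⟩ := hf.contDiffOn le_rfl (by simp)
  obtain ⟨ε, hε, hball⟩ := Metric.mem_nhds_iff.mp hu
  have hB : Metric.ball c ε ∈ 𝓝 c := Metric.ball_mem_nhds c hε
  have htaylor := taylor_isLittleO (n := 2) (convex_ball c ε) (Metric.mem_ball_self hε)
    (by exact_mod_cast hfu.mono hball)
  rw [nhdsWithin_eq_nhds.mpr hB] at htaylor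
  have hquad :
      (fun x => ((2 : ℝ)⁻¹ * (x - c) ^ 2) • iteratedDerivWithin 2 f (Metric.ball c ε) c)
        =O[𝓝 c] fun x => (x - c) ^ 2 :=
    isBigO_of_le' _ fun x => by rw [norm_smul, norm_mul, mul_comm, mul_assoc]
  refine (htaylor.isBigO.add hquad).congr_left fun x => ?_
  norm_num [taylorWithinEval_succ, derivWithin_of_mem_nhds hB]
  abel

theorem setIntegral_Ici_comp_sub_div {E : Type*} [NormedAddCommGroup E] [NormedSpace ℝ E]
    (g : ℝ → E) (c : ℝ) {h : ℝ} (hh : 0 < h) :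
    ∫ x in Ici c, g ((x - c) / h) = h • ∫ y in Ioi 0, g y := by
  have hshift := (measurePreserving_add_right volume c).setIntegral_preimage_emb
    (measurableEmbedding_addRight c) (fun x => g ((x - c) / h)) (Ioi c)
  rw [preimage_add_const_Ioi, sub_self] at hshift
  simp only [add_sub_cancel_right] at hshift
  rw [integral_Ici_eq_integral_Ioi, ← hshift]
  simp_rw [div_eq_inv_mul]
  rw [integral_comp_mul_left_Ioi _ _ (inv_pos.mpr hh), mul_zero, inv_inv]

theorem setIntegral_Ici_scaledKernel_mul_pow_mul (K f : ℝ → ℝ) (c : ℝ) (j : ℕ) {h : ℝ}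
    (hh : 0 < h) :
    ∫ x in Ici c, K ((x - c) / h) / h * (x - c) ^ j * f x
      = h ^ j * ∫ y in Ioi 0, y ^ j * K y * f (c + h * y) := by
  set g : ℝ → ℝ := fun u => K u / h * (h * u) ^ j * f (c + h * u)
  calc ∫ x in Ici c, K ((x - c) / h) / h * (x - c) ^ j * f x
      = ∫ x in Ici c, g ((x - c) / h) := by
        simp only [g, mul_div_cancel₀ _ hh.ne', add_sub_cancel]
    _ = h • ∫ y in Ioi 0, g y := setIntegral_Ici_comp_sub_div g c hh
    _ = h ^ j * ∫ y in Ioi 0, y ^ j * K y * f (c + h * y) := by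
        rw [smul_eq_mul, ← integral_const_mul, ← integral_const_mul]
        refine integral_congr_ae (ae_of_all _ fun y => ?_)
        simp only [g]
        field_simp
        ring

/-- `f` need not be measurable away from `s`, but the product is continuous: near a point outside
`tsupport K` it vanishes identically. -/
theorem eventually_integrable_mul_comp_const_add_mul {K f : ℝ → ℝ} (hK : Continuous K)
    (hKs : HasCompactSupport K) {c : ℝ} {s : Set ℝ} (hs : s ∈ 𝓝 c)
    (hf : ContinuousOn f s) :
    ∀ᶠ h in 𝓝 0, Integrable fun y => K y * f (c + h * y) := by
  obtain ⟨R, hR⟩ := hKs.isBounded.subset_closedBall 0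
  obtain ⟨ε, hε, hball⟩ := Metric.mem_nhds_iff.mp hs
  have hsmall : ∀ᶠ h : ℝ in 𝓝 0, |h| * R < ε :=
    (continuous_abs.mul continuous_const).tendsto' 0 0 (by simp) |>.eventually (gt_mem_nhds hε)
  filter_upwards [hsmall] with h hh
  refine Continuous.integrable_of_hasCompactSupport ?_ hKs.mul_right
  refine continuous_of_tsupport fun y hy => ?_
  have hyR : |y| ≤ R := by simpa using hR (tsupport_mul_subset_left hy)
  have hmem : c + h * y ∈ Metric.ball c ε := by
    rw [Metric.mem_ball, dist_eq_norm, add_sub_cancel_left, norm_mul, Real.norm_eq_abs,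
      Real.norm_eq_abs]
    exact (mul_le_mul_of_nonneg_left hyR (abs_nonneg h)).trans_lt hh
  have hfx : ContinuousAt f (c + h * y) :=
    hf.continuousAt (mem_of_superset (Metric.isOpen_ball.mem_nhds hmem) hball)
  exact hK.continuousAt.mul (hfx.comp_of_eq (by fun_prop) rfl)

theorem isBigO_setIntegral_Ioi_pow_mul_mul_comp_mul {K r : ℝ → ℝ} (hK : Continuous K)
    (hKs : HasCompactSupport K) (hr : r =O[𝓝[≥] 0] fun t => t ^ 2) (j : ℕ) :
    (fun h => ∫ y in Ioi 0, y ^ j * K y * r (h * y)) =O[𝓝[>] 0] fun h => h ^ 2 := by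
  obtain ⟨C, hC, hCr⟩ := hr.exists_pos
  obtain ⟨ε, hε, hε'⟩ := mem_nhdsGE_iff_exists_Ico_subset.mp hCr.bound
  obtain ⟨M, hM⟩ := hKs.isCompact.bddAbove
  have hKM : ∀ y, M < y → K y = 0 := fun y hy =>
    image_eq_zero_of_notMem_tsupport fun hyK => (hM hyK).not_gt hy
  have hsmall : ∀ᶠ h : ℝ in 𝓝[>] 0, h * M < ε :=
    ((continuous_id.mul continuous_const).tendsto' 0 0 (by simp)).eventually (gt_mem_nhds hε)
      |>.filter_mono nhdsWithin_le_nhds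
  have hint : Integrable fun y : ℝ => y ^ (j + 2) * |K y| :=
    ((continuous_pow _).mul hK.abs).integrable_of_hasCompactSupport hKs.abs.mul_left
  refine isBigO_iff.mpr ⟨C * ∫ y in Ioi 0, y ^ (j + 2) * |K y|, ?_⟩
  filter_upwards [self_mem_nhdsWithin, hsmall] with h (hh : 0 < h) hhM
  have hpt : ∀ y ∈ Ioi (0 : ℝ),
      ‖y ^ j * K y * r (h * y)‖ ≤ C * h ^ 2 * (y ^ (j + 2) * |K y|) := by
    intro y (hy : 0 < y)
    rcases le_or_gt y M with hyM | hyM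
    · have hhy : h * y ∈ Ico 0 ε :=
        ⟨by positivity, (mul_le_mul_of_nonneg_left hyM hh.le).trans_lt hhM⟩
      calc ‖y ^ j * K y * r (h * y)‖ = y ^ j * |K y| * ‖r (h * y)‖ := by
            rw [norm_mul, norm_mul, norm_pow, Real.norm_of_nonneg hy.le, Real.norm_eq_abs]
        _ ≤ y ^ j * |K y| * (C * ‖(h * y) ^ 2‖) := by gcongr; exact hε' hhy
        _ = C * h ^ 2 * (y ^ (j + 2) * |K y|) := by
            rw [norm_pow, Real.norm_of_nonneg (by positivity)]; ring
    · simp only [hKM y hyM, mul_zero, zero_mul, norm_zero, abs_zero, le_refl]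
  calc ‖∫ y in Ioi 0, y ^ j * K y * r (h * y)‖
      ≤ ∫ y in Ioi 0, C * h ^ 2 * (y ^ (j + 2) * |K y|) :=
        norm_integral_le_of_norm_le (hint.integrableOn.const_mul _)
          (ae_restrict_of_forall_mem measurableSet_Ioi hpt)
    _ = C * (∫ y in Ioi 0, y ^ (j + 2) * |K y|) * ‖h ^ 2‖ := by
        rw [integral_const_mul, norm_pow, Real.norm_of_nonneg hh.le]; ring

theorem setIntegral_Ioi_pow_mul_mul_sub_taylor {K f : ℝ → ℝ} (hK : Continuous K)
    (hKs : HasCompactSupport K) (c d h : ℝ) (j : ℕ)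
    (hG : IntegrableOn (fun y => y ^ j * K y * f (c + h * y)) (Ioi 0)) :
    ∫ y in Ioi 0, y ^ j * K y * (f (c + h * y) - f c - h * y * d)
      = (∫ y in Ioi 0, y ^ j * K y * f (c + h * y))
        - (f c * (∫ y in Ioi 0, y ^ j * K y) + h * d * ∫ y in Ioi 0, y ^ (j + 1) * K y) := by
  have hmom : ∀ m : ℕ, IntegrableOn (fun y : ℝ => y ^ m * K y) (Ioi 0) := fun m =>
    ((continuous_pow m).mul hK).integrable_of_hasCompactSupport hKs.mul_left |>.integrableOn
  have hexpand : (fun y => y ^ j * K y * (f (c + h * y) - f c - h * y * d))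
      = fun y => y ^ j * K y * f (c + h * y)
        - (f c * (y ^ j * K y) + h * d * (y ^ (j + 1) * K y)) := by
    funext y
    ring
  rw [hexpand, integral_sub (g := fun y => f c * (y ^ j * K y) + h * d * (y ^ (j + 1) * K y)) hG
      (((hmom j).const_mul _).add ((hmom (j + 1)).const_mul _)),
    integral_add ((hmom j).const_mul _) ((hmom (j + 1)).const_mul _), integral_const_mul,
    integral_const_mul]

theorem one_sided_kernel_moment_expansion_general
    (f : ℝ → ℝ) (c : ℝ) (s : Set ℝ) (hs : s ∈ nhds c) (hf : ContDiffOn ℝ 2 f s)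
    (K : ℝ → ℝ) (hK_cont : Continuous K)
    (hK_supp : HasCompactSupport K)
    (j : ℕ) :
    (fun h : ℝ =>
        (∫ x in Set.Ici c, (K ((x - c) / h) / h) * (x - c) ^ j * f x)
          - h ^ j * (f c * (∫ u in Set.Ioi (0:ℝ), u ^ j * K u)
              + h * deriv f c * (∫ u in Set.Ioi (0:ℝ), u ^ (j + 1) * K u)))
      =O[nhdsWithin 0 (Set.Ioi 0)] (fun h : ℝ => h ^ (j + 2)) := by
  have hr : (fun t => f (c + t) - f c - t * deriv f c) =O[𝓝[≥] 0] fun t => t ^ 2 := by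
    have hc : Tendsto (c + ·) (𝓝 0) (𝓝 c) := by
      simpa using (continuous_const_add c).tendsto 0
    refine (((ContDiffAt.isBigO_sub_sub_smul_deriv (hf.contDiffAt hs)).comp_tendsto hc).mono
      nhdsWithin_le_nhds).congr (fun t => ?_) (fun t => ?_) <;> simp
  have hG := eventually_integrable_mul_comp_const_add_mul (K := fun y => y ^ j * K y)
    ((continuous_pow j).mul hK_cont) hK_supp.mul_left hs hf.continuousOn
  have hremainder : ∀ᶠ h in 𝓝[>] 0,
      h ^ j * ∫ y in Ioi 0, y ^ j * K y * (f (c + h * y) - f c - h * y * deriv f c)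
        = (∫ x in Ici c, K ((x - c) / h) / h * (x - c) ^ j * f x)
          - h ^ j * (f c * (∫ u in Ioi 0, u ^ j * K u)
              + h * deriv f c * (∫ u in Ioi 0, u ^ (j + 1) * K u)) := by
    filter_upwards [self_mem_nhdsWithin, hG.filter_mono nhdsWithin_le_nhds] with h hh hGh
    rw [setIntegral_Ici_scaledKernel_mul_pow_mul K f c j hh,
      setIntegral_Ioi_pow_mul_mul_sub_taylor hK_cont hK_supp c _ h j hGh.integrableOn, mul_sub]
  have hbound := isBigO_setIntegral_Ioi_pow_mul_mul_comp_mul hK_cont hK_supp hr j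
  beta_reduce at hbound
  refine ((isBigO_refl (fun h : ℝ => h ^ j) _).mul hbound).congr' hremainder
    (Eventually.of_forall fun h => (pow_add h j 2).symm)

theorem one_sided_kernel_moment_expansion
    (f : ℝ → ℝ) (c : ℝ) (s : Set ℝ) (hs : s ∈ nhds c) (hf : ContDiffOn ℝ 2 f s)
    (K : ℝ → ℝ) (hK_cont : Continuous K) (hK_nonneg : ∀ u, 0 ≤ K u)
    (hK_supp : HasCompactSupport K) (hK_prob : ∫ u, K u = 1)
    (j : ℕ) :
    (fun h : ℝ =>
        (∫ x in Set.Ici c, (K ((x - c) / h) / h) * (x - c) ^ j * f x)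
          - h ^ j * (f c * (∫ u in Set.Ioi (0:ℝ), u ^ j * K u)
              + h * deriv f c * (∫ u in Set.Ioi (0:ℝ), u ^ (j + 1) * K u)))
      =O[nhdsWithin 0 (Set.Ioi 0)] (fun h : ℝ => h ^ (j + 2)) :=
  one_sided_kernel_moment_expansion_general f c s hs hf K hK_cont hK_supp j
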